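/- arXiv:2211.16432 — 2 statements merged into one kernel-verified Lean document; each statement's English description precedes it below -/
import Mathlib

section
/- Let G be an edge-minimal counterexample to 'every graph without isolated vertices and isolated edges satisfies γ_tg(G) ≤ 3n/4'. If u is a vertex of G adjacent to a leaf w and to another vertex v (v ≠ w), then the graph G − uv obtained by deleting the edge uv contains an isolated edge (a K_2 component). -/
open scoped Classical

namespace GameTD

/-- A move `v` is legal w.r.t. selected set `S` in the total domination game:
`v` totally dominates some vertex not yet totally dominated. -/
def Legal {V : Type*} (G : SimpleGraph V) (S : Finset V) (v : V) : Prop :=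
  ∃ w, G.Adj v w ∧ ∀ u ∈ S, ¬ G.Adj u w

theorem Legal.not_mem {V : Type*} {G : SimpleGraph V} {S : Finset V} {v : V}
    (h : Legal G S v) : v ∉ S := by
  rcases h with ⟨w, hadj, hw⟩
  intro hv
  exact hw v hv hadj

/-- The value of the total domination game from position `S`, with `b = true`
meaning Dominator (the minimizer) to move. The game ends when no legal move exists. -/
noncomputable def val {V : Type*} [Fintype V] (G : SimpleGraph V) (b : Bool) (S : Finset V) : ℕ :=
  let L := Finset.univ.filter (fun v => Legal G S v)
  if h : L.Nonempty then
    have hL : L.attach.Nonempty := h.attach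
    if b then
      1 + L.attach.inf' hL (fun v => val G false (insert v.1 S))
    else
      1 + L.attach.sup' hL (fun v => val G true (insert v.1 S))
  else 0
termination_by (Finset.univ \ S).card
decreasing_by
  all_goals {
    have hv : Legal G S v.1 := by
      have := v.2
      try simp only [Finset.mem_filter] at this
      exact (Finset.mem_filter.mp v.2).2
    have hvS : v.1 ∉ S := hv.not_mem
    apply Finset.card_lt_card
    constructor
    · intro x hx
      simp only [Finset.mem_sdiff] at hx ⊢
      exact ⟨hx.1, fun hmem => hx.2 (Finset.mem_insert_of_mem hmem)⟩
    · intro hsub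
      have : v.1 ∈ Finset.univ \ S := by
        simp [hvS]
      have := hsub this
      simp at this
  }

/-- The game total domination number: Dominator starts from the empty position. -/
noncomputable def gammaTG {V : Type*} [Fintype V] (G : SimpleGraph V) : ℕ :=
  val G true ∅

end GameTD


/-!
Dominator can play the game on `G` by imagining a game on a graph `H` that maps into `G` with
only the edge `uv` lost, where `w` is a leaf at `u` that survives in `H`. Every Staller move in
`G` is answered by a copied move in `H`, with the leaf `w` standing in for `v` and vice versa;
every optimal Dominator move in `H` is copied to `G` when legal and replaced by an arbitrary
legal move otherwise. The invariant is that everything dominated in `H` is dominated in `G`, and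
`v` is dominated in `G` once `w` is dominated in `H`; hence `γ_tg(G) ≤ γ_tg(H)`.

If `u` has a neighbour `z ∉ {v, w}` and `G - uv` has no isolated edge, then either `G - uv`
(when `v` has another neighbour) or `G - v` (when `v` is a second leaf at `u`) is a smaller graph
without isolated vertices and isolated edges, so minimality bounds `γ_tg(G)` by `3n/4`.
-/

open Finset SimpleGraph

namespace GameTD

variable {V W : Type*}

def HasIsolatedEdge (G : SimpleGraph V) : Prop :=
  ∃ a b, G.Adj a b ∧ (∀ x, G.Adj a x → x = b) ∧ (∀ x, G.Adj b x → x = a)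

def totDominated (G : SimpleGraph V) (S : Finset V) : Set V :=
  {x | ∃ s ∈ S, G.Adj s x}

section totDominated

variable {G : SimpleGraph V} {S : Finset V} {m : V}

theorem legal_iff : Legal G S m ↔ ∃ x, G.Adj m x ∧ x ∉ totDominated G S := by
  simp [Legal, totDominated]

theorem not_legal_iff : ¬ Legal G S m ↔ G.neighborSet m ⊆ totDominated G S := by
  simp only [legal_iff, not_exists, not_and, not_not]
  rfl

theorem totDominated_insert :
    totDominated G (insert m S) = G.neighborSet m ∪ totDominated G S := by
  ext x
  simp [totDominated]

theorem totDominated_subset_insert : totDominated G S ⊆ totDominated G (insert m S) :=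
  totDominated_insert (G := G) ▸ Set.subset_union_right

theorem neighborSet_subset_totDominated_insert :
    G.neighborSet m ⊆ totDominated G (insert m S) :=
  totDominated_insert (G := G) ▸ Set.subset_union_left

theorem exists_legal_neighborSet_subset (hS : ∃ m, Legal G S m) (x : V) :
    ∃ m, Legal G S m ∧ G.neighborSet x ⊆ totDominated G (insert m S) := by
  by_cases hx : Legal G S x
  · exact ⟨x, hx, neighborSet_subset_totDominated_insert⟩
  · obtain ⟨m, hm⟩ := hS
    exact ⟨m, hm, (not_legal_iff.mp hx).trans totDominated_subset_insert⟩

end totDominated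

section value

variable [Fintype V] (G : SimpleGraph V) {S : Finset V} {m : V}

theorem val_eq_zero (h : ∀ m, ¬ Legal G S m) (b : Bool) : val G b S = 0 := by
  rw [val, dif_neg]
  simpa [Finset.filter_nonempty_iff] using h

theorem val_true_le (hm : Legal G S m) : val G true S ≤ 1 + val G false (insert m S) := by
  have hmem : m ∈ univ.filter (Legal G S) := by simp [hm]
  rw [val, dif_pos ⟨m, hmem⟩, if_pos rfl]
  exact Nat.add_le_add_left (inf'_le _ (mem_attach _ ⟨m, hmem⟩)) 1

theorem exists_val_true_eq (hm : Legal G S m) :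
    ∃ m, Legal G S m ∧ val G true S = 1 + val G false (insert m S) := by
  have hne : (univ.filter (Legal G S)).Nonempty := ⟨m, by simp [hm]⟩
  obtain ⟨i, -, heq⟩ := exists_mem_eq_inf' hne.attach fun v => val G false (insert v.1 S)
  refine ⟨i.1, (mem_filter.mp i.2).2, ?_⟩
  rw [val, dif_pos hne, if_pos rfl, heq]

theorem le_val_false (hm : Legal G S m) : 1 + val G true (insert m S) ≤ val G false S := by
  have hmem : m ∈ univ.filter (Legal G S) := by simp [hm]
  conv_rhs => rw [val, dif_pos ⟨m, hmem⟩, if_neg Bool.false_ne_true]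
  exact Nat.add_le_add_left
    (le_sup' (fun v => val G true (insert v.1 S)) (mem_attach _ ⟨m, hmem⟩)) 1

theorem val_false_le {k : ℕ} (h : ∀ m, Legal G S m → 1 + val G true (insert m S) ≤ k) :
    val G false S ≤ k := by
  by_cases hne : (univ.filter (Legal G S)).Nonempty
  · obtain ⟨i, -, heq⟩ := exists_mem_eq_sup' hne.attach fun v => val G true (insert v.1 S)
    rw [val, dif_pos hne, if_neg Bool.false_ne_true, heq]
    exact h i.1 (mem_filter.mp i.2).2
  · rw [val, dif_neg hne]
    exact Nat.zero_le k

theorem card_compl_insert_lt (hm : Legal G S m) : #(univ \ insert m S) < #(univ \ S) := by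
  rw [sdiff_insert]
  exact card_erase_lt_of_mem (by simpa using hm.not_mem)

end value

section simulation

variable [Fintype V] [Fintype W] {G : SimpleGraph V} {H : SimpleGraph W}

/-- Dominator plays on `G` while imagining the game on `H`. No pass is ever needed: when the
move copied from `H` is illegal in `G`, `hDom` lets an arbitrary legal move take its place. -/
theorem val_le_val_of_simulation (R : Finset V → Finset W → Prop)
    (hDom : ∀ S T a, R S T → Legal H T a → (∃ m, Legal G S m) →
      ∃ m, Legal G S m ∧ R (insert m S) (insert a T))
    (hSta : ∀ S T m, R S T → Legal G S m → ∃ a, Legal H T a ∧ R (insert m S) (insert a T))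
    (b : Bool) (S : Finset V) (T : Finset W) (hST : R S T) : val G b S ≤ val H b T := by
  cases b with
  | true =>
    by_cases hG : ∃ m, Legal G S m
    · obtain ⟨m, hm⟩ := hG
      obtain ⟨a, ha, -⟩ := hSta S T m hST hm
      obtain ⟨a', ha', hval⟩ := exists_val_true_eq H ha
      obtain ⟨m', hm', hR⟩ := hDom S T a' hST ha' ⟨m, hm⟩
      have := card_compl_insert_lt H ha'
      calc val G true S ≤ 1 + val G false (insert m' S) := val_true_le G hm'
        _ ≤ 1 + val H false (insert a' T) :=
          Nat.add_le_add_left (val_le_val_of_simulation R hDom hSta false _ _ hR) 1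
        _ = val H true T := hval.symm
    · rw [val_eq_zero G (not_exists.mp hG)]
      exact Nat.zero_le _
  | false =>
    refine val_false_le G fun m hm => ?_
    obtain ⟨a, ha, hR⟩ := hSta S T m hST hm
    have := card_compl_insert_lt H ha
    calc 1 + val G true (insert m S) ≤ 1 + val H true (insert a T) :=
          Nat.add_le_add_left (val_le_val_of_simulation R hDom hSta true _ _ hR) 1
      _ ≤ val H false T := le_val_false H ha
termination_by #(univ \ T)

end simulation

section leaf

variable {G : SimpleGraph V} {H : SimpleGraph W} (f : H →g G)

def Tracks (w : W) (v : V) (S : Finset V) (T : Finset W) : Prop :=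
  totDominated H T ⊆ f ⁻¹' totDominated G S ∧
    (w ∈ totDominated H T → v ∈ totDominated G S)

variable {f} {u w : W} {v : V} {S : Finset V} {T : Finset W}

theorem Tracks.step (h : Tracks f w v S T) (hw : ∀ x, G.Adj (f w) x → x = f u)
    (huv : G.Adj (f u) v) {m : V} {a : W}
    (ha : G.neighborSet (f a) ⊆ totDominated G (insert m S)) :
    Tracks f w v (insert m S) (insert a T) := by
  refine ⟨fun y hy => ?_, fun hwT => ?_⟩
  · rcases totDominated_insert ▸ hy with hy | hy
    · exact ha (f.map_adj hy)
    · exact totDominated_subset_insert (h.1 hy)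
  · rcases totDominated_insert ▸ hwT with haw | hwT
    · have hau : f a = f u := hw _ (f.map_adj haw).symm
      exact ha (hau ▸ huv)
    · exact totDominated_subset_insert (h.2 hwT)

theorem Tracks.exists_legal (h : Tracks f w v S T) (huw : H.Adj u w)
    (hw : ∀ x, G.Adj (f w) x → x = f u)
    (hlift : ∀ x y, G.Adj x y → s(x, y) ≠ s(f u, v) →
      ∃ a b, H.Adj a b ∧ f a = x ∧ f b = y)
    {m : V} (hm : Legal G S m) :
    ∃ a, Legal H T a ∧ G.neighborSet (f a) ⊆ totDominated G (insert m S) := by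
  obtain ⟨x, hmx, hx⟩ := legal_iff.mp hm
  by_cases he : s(m, x) = s(f u, v)
  · rcases Sym2.eq_iff.mp he with ⟨rfl, rfl⟩ | ⟨rfl, rfl⟩
    · exact ⟨u, legal_iff.mpr ⟨w, huw, fun hwT => hx (h.2 hwT)⟩,
        neighborSet_subset_totDominated_insert⟩
    · refine ⟨w, legal_iff.mpr ⟨u, huw.symm, fun huT => hx (h.1 huT)⟩, fun y hy => ?_⟩
      rw [hw y hy]
      exact neighborSet_subset_totDominated_insert hmx
  · obtain ⟨a, b, hab, rfl, rfl⟩ := hlift m x hmx he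
    exact ⟨a, legal_iff.mpr ⟨b, hab, fun hbT => hx (h.1 hbT)⟩,
      neighborSet_subset_totDominated_insert⟩

variable (f) in
theorem gammaTG_le_gammaTG_of_hom [Fintype V] [Fintype W] (huw : H.Adj u w)
    (hw : ∀ x, G.Adj (f w) x → x = f u) (huv : G.Adj (f u) v)
    (hlift : ∀ x y, G.Adj x y → s(x, y) ≠ s(f u, v) →
      ∃ a b, H.Adj a b ∧ f a = x ∧ f b = y) :
    gammaTG G ≤ gammaTG H :=
  val_le_val_of_simulation (Tracks f w v)
    (fun _ _ a hST _ hS =>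
      let ⟨m, hm, ha⟩ := exists_legal_neighborSet_subset hS (f a)
      ⟨m, hm, hST.step hw huv ha⟩)
    (fun _ _ _ hST hm =>
      let ⟨a, ha, hsub⟩ := hST.exists_legal huw hw hlift hm
      ⟨a, ha, hST.step hw huv hsub⟩)
    true ∅ ∅ (by simp [Tracks, totDominated])

end leaf

section graph

variable {G : SimpleGraph V} {u v w : V}

theorem adj_eq_of_degree_eq_one [Fintype (G.neighborSet w)] (hw : G.degree w = 1) {x y : V}
    (hx : G.Adj w x) (hy : G.Adj w y) : x = y :=
  (degree_eq_one_iff_existsUnique_adj.mp hw).unique hx hy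

theorem hasIsolatedEdge_deleteEdges (hw : ∀ x, G.Adj w x → x = u) (huw : G.Adj u w)
    (hvw : v ≠ w) (hu : ∀ x, G.Adj u x → x = w ∨ x = v) :
    HasIsolatedEdge (G.deleteEdges {s(u, v)}) := by
  refine ⟨u, w, deleteEdges_adj.mpr ⟨huw, ?_⟩, fun x hx => ?_,
    fun x hx => hw x (deleteEdges_adj.mp hx).1⟩
  · simp [hvw.symm, huw.ne.symm]
  · obtain ⟨hux, hne⟩ := deleteEdges_adj.mp hx
    exact (hu x hux).resolve_right (by rintro rfl; exact hne rfl)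

theorem forall_exists_adj_deleteEdges (h : ∀ x, ∃ y, G.Adj x y) {u' v' : V} (hu : G.Adj u u')
    (hu' : u' ≠ v) (hv : G.Adj v v') (hv' : v' ≠ u) :
    ∀ x, ∃ y, (G.deleteEdges {s(u, v)}).Adj x y := by
  intro x
  by_cases hxu : x = u
  · subst hxu
    exact ⟨u', deleteEdges_adj.mpr ⟨hu, by simp [hu', hu.ne.symm]⟩⟩
  by_cases hxv : x = v
  · subst hxv
    exact ⟨v', deleteEdges_adj.mpr ⟨hv, by simp [hv', hxu]⟩⟩
  obtain ⟨y, hy⟩ := h x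
  exact ⟨y, deleteEdges_adj.mpr ⟨hy, by simp [hxu, hxv]⟩⟩

theorem forall_exists_adj_induce_compl (hv : ∀ x, G.Adj v x → x = u)
    (h : ∀ x, ∃ y, G.Adj x y) (huw : G.Adj u w) (hwv : w ≠ v) :
    ∀ x : ({v}ᶜ : Set V), ∃ y, (G.induce {v}ᶜ).Adj x y := by
  rintro ⟨x, hx⟩
  obtain ⟨y, hy⟩ := h x
  by_cases hyv : y = v
  · subst hyv
    obtain rfl := hv x hy.symm
    exact ⟨⟨w, hwv⟩, huw⟩
  · exact ⟨⟨y, hyv⟩, hy⟩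

/-- A neighbour `u` of the leaf `v` keeps two neighbours `w, z` after removing `v`, so it cannot
become the end of an isolated edge. -/
theorem not_hasIsolatedEdge_induce_compl (hG : ¬ HasIsolatedEdge G)
    (hv : ∀ x, G.Adj v x → x = u) {z : V} (huw : G.Adj u w)
    (huz : G.Adj u z) (hwz : w ≠ z) (hwv : w ≠ v) (hzv : z ≠ v) :
    ¬ HasIsolatedEdge (G.induce {v}ᶜ) := by
  have lift (a b : ({v}ᶜ : Set V)) (ha : ∀ x, (G.induce {v}ᶜ).Adj a x → x = b) :
      ∀ x, G.Adj a x → x = b := by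
    intro x hx
    have hxv : x ≠ v := by
      intro hxv
      have hau : (a : V) = u := hv a (hxv ▸ hx.symm)
      have haw : (⟨w, hwv⟩ : ({v}ᶜ : Set V)) = b := ha _ (show G.Adj a w from hau ▸ huw)
      have haz : (⟨z, hzv⟩ : ({v}ᶜ : Set V)) = b := ha _ (show G.Adj a z from hau ▸ huz)
      exact hwz (congrArg Subtype.val (haw.trans haz.symm))
    exact congrArg Subtype.val (ha ⟨x, hxv⟩ hx)
  rintro ⟨a, b, hab, ha, hb⟩
  exact hG ⟨a, b, hab, lift a b ha, lift b a hb⟩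

theorem exists_induce_compl_adj (hv : ∀ x, G.Adj v x → x = u) {x y : V} (hxy : G.Adj x y)
    (hne : s(x, y) ≠ s(u, v)) :
    ∃ a b : ({v}ᶜ : Set V), (G.induce {v}ᶜ).Adj a b ∧ (a : V) = x ∧ (b : V) = y := by
  have hx : x ≠ v := by
    rintro rfl
    exact hne (hv y hxy ▸ Sym2.eq_swap)
  have hy : y ≠ v := by
    rintro rfl
    exact hne (hv x hxy.symm ▸ rfl)
  exact ⟨⟨x, hx⟩, ⟨y, hy⟩, hxy, rfl, rfl⟩

theorem card_edgeFinset_lt_of_copy {H : SimpleGraph W} (f : Copy H G) [Fintype H.edgeSet]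
    [Fintype G.edgeSet] {x y : V} (hxy : G.Adj x y)
    (hf : ∀ a b, H.Adj a b → s(f a, f b) ≠ s(x, y)) : #H.edgeFinset < #G.edgeFinset := by
  rw [← card_edgeSet, ← card_edgeSet]
  refine Fintype.card_lt_of_injective_not_surjective _ f.mapEdgeSet.injective fun hsurj => ?_
  obtain ⟨⟨e, he⟩, hfe⟩ := hsurj ⟨s(x, y), hxy⟩
  induction e using Sym2.ind with
  | _ a b => exact hf a b he (congrArg Subtype.val hfe)

theorem card_edgeFinset_deleteEdges_lt {u v : V} [Fintype (G.deleteEdges {s(u, v)}).edgeSet]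
    [Fintype G.edgeSet] (huv : G.Adj u v) :
    #(G.deleteEdges {s(u, v)}).edgeFinset < #G.edgeFinset :=
  card_edgeFinset_lt_of_copy (Copy.ofLE _ G (G.deleteEdges_le _)) huv
    fun _ _ hab => (deleteEdges_adj.mp hab).2

theorem card_edgeFinset_induce_compl_lt {u v : V} [Fintype (G.induce {v}ᶜ).edgeSet]
    [Fintype G.edgeSet] (huv : G.Adj u v) :
    #(G.induce {v}ᶜ).edgeFinset < #G.edgeFinset :=
  card_edgeFinset_lt_of_copy (Copy.induce G _) huv fun a b _ hab => by
    rcases Sym2.eq_iff.mp hab with ⟨-, hb⟩ | ⟨ha, -⟩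
    exacts [b.2 hb, a.2 ha]

end graph

section reductions

variable [Fintype V] {G : SimpleGraph V} {u v w : V}

theorem gammaTG_le_gammaTG_deleteEdges (hw : ∀ x, G.Adj w x → x = u) (huw : G.Adj u w)
    (huv : G.Adj u v) (hvw : v ≠ w) : gammaTG G ≤ gammaTG (G.deleteEdges {s(u, v)}) :=
  gammaTG_le_gammaTG_of_hom (Hom.ofLE (G.deleteEdges_le _))
    (deleteEdges_adj.mpr ⟨huw, by simp [hvw.symm, huw.ne.symm]⟩) hw huv
    fun x y hxy hne => ⟨x, y, deleteEdges_adj.mpr ⟨hxy, hne⟩, rfl, rfl⟩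

theorem gammaTG_le_gammaTG_induce_compl (hv : ∀ x, G.Adj v x → x = u)
    (hw : ∀ x, G.Adj w x → x = u) (huw : G.Adj u w) (huv : G.Adj u v) (hwv : w ≠ v) :
    gammaTG G ≤ gammaTG (G.induce {v}ᶜ) :=
  gammaTG_le_gammaTG_of_hom (Embedding.induce _).toHom (u := ⟨u, huv.ne⟩) (w := ⟨w, hwv⟩)
    huw hw huv fun _ _ => exists_induce_compl_adj hv

end reductions

end GameTD

open GameTD in
/-- If `G` is an edge-minimal counterexample to the 3/4-bound, `u` is adjacent to a
leaf `w` and to another vertex `v ≠ w`, then `G - uv` contains an isolated edge. -/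
theorem isolated_edge_after_deletion {V : Type} [Fintype V] (G : SimpleGraph V)
    (h_no_isolated_vertex : ∀ v : V, ∃ w, G.Adj v w)
    (h_no_isolated_edge :
      ¬ ∃ u v : V, G.Adj u v ∧ (∀ w, G.Adj u w → w = v) ∧ (∀ w, G.Adj v w → w = u))
    (h_counterexample : ¬ (4 * GameTD.gammaTG G ≤ 3 * Fintype.card V))
    (h_minimal : ∀ (W : Type) [Fintype W] (H : SimpleGraph W),
      (∀ v : W, ∃ w, H.Adj v w) →
      (¬ ∃ u v : W, H.Adj u v ∧ (∀ w, H.Adj u w → w = v) ∧ (∀ w, H.Adj v w → w = u)) →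
      H.edgeFinset.card < G.edgeFinset.card →
      4 * GameTD.gammaTG H ≤ 3 * Fintype.card W)
    (u w v : V) (h_leaf : G.degree w = 1) (h_uw : G.Adj u w) (h_uv : G.Adj u v)
    (h_vw : v ≠ w) :
    ∃ a b : V, (G.deleteEdges {s(u, v)}).Adj a b ∧
      (∀ x, (G.deleteEdges {s(u, v)}).Adj a x → x = b) ∧
      (∀ x, (G.deleteEdges {s(u, v)}).Adj b x → x = a) := by
  have hw : ∀ x, G.Adj w x → x = u := fun x hx => adj_eq_of_degree_eq_one h_leaf hx h_uw.symm
  by_cases hu : ∀ x, G.Adj u x → x = w ∨ x = v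
  · exact hasIsolatedEdge_deleteEdges hw h_uw h_vw hu
  obtain ⟨z, huz, hzwv⟩ := not_forall₂.mp hu
  obtain ⟨hzw, hzv⟩ := not_or.mp hzwv
  by_contra hno
  have reduce (W : Type) [Fintype W] (H : SimpleGraph W) (f : Copy H G)
      (hH : ∀ x, ∃ y, H.Adj x y) (hH' : ¬ HasIsolatedEdge H)
      (hE : #H.edgeFinset < #G.edgeFinset) (hγ : gammaTG G ≤ gammaTG H) : False :=
    h_counterexample <| calc
      4 * gammaTG G ≤ 4 * gammaTG H := Nat.mul_le_mul_left 4 hγ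
      _ ≤ 3 * Fintype.card W := h_minimal W H hH hH' hE
      _ ≤ 3 * Fintype.card V :=
        Nat.mul_le_mul_left 3 (Fintype.card_le_of_injective f f.injective)
  by_cases hv : ∃ v', G.Adj v v' ∧ v' ≠ u
  · obtain ⟨v', hvv', hv'u⟩ := hv
    exact reduce V _ (Copy.ofLE _ G (G.deleteEdges_le _))
      (forall_exists_adj_deleteEdges h_no_isolated_vertex h_uw h_vw.symm hvv' hv'u) hno
      (by convert card_edgeFinset_deleteEdges_lt h_uv)
      (gammaTG_le_gammaTG_deleteEdges hw h_uw h_uv h_vw)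
  · have hv_leaf : ∀ x, G.Adj v x → x = u := fun x hx =>
      not_not.mp fun hxu => hv ⟨x, hx, hxu⟩
    exact reduce _ _ (Copy.induce G {v}ᶜ)
      (forall_exists_adj_induce_compl hv_leaf h_no_isolated_vertex h_uw h_vw.symm)
      (not_hasIsolatedEdge_induce_compl h_no_isolated_edge hv_leaf h_uw huz (Ne.symm hzw)
        h_vw.symm hzv)
      (card_edgeFinset_induce_compl_lt h_uv)
      (gammaTG_le_gammaTG_induce_compl hv_leaf hw h_uw h_uv h_vw.symm)
end

section
/- Continuation principle for the transversal game: for any hypergraph H and sets of vertices A ⊆ B, we have τ_g(H; B) ≤ τ_g(H; A) and τ'_g(H; B) ≤ τ'_g(H; A). -/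
open scoped Classical

namespace TransversalGame

/-- A move `v` is legal w.r.t. the selected set `S` in the transversal game on a
hypergraph with edge set `E`: `v` lies in some edge disjoint from `S`. -/
def Legal {V : Type*} (E : Finset (Finset V)) (S : Finset V) (v : V) : Prop :=
  ∃ e ∈ E, v ∈ e ∧ ∀ u ∈ S, u ∉ e

theorem Legal.not_mem {V : Type*} {E : Finset (Finset V)} {S : Finset V} {v : V}
    (h : Legal E S v) : v ∉ S := by
  rcases h with ⟨e, _, hv, hd⟩
  exact fun hvS => hd v hvS hv

/-- Value of the transversal game from position `S`; `b = true` means Edge-hitter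
(the minimizer) to move. The game ends when the selected set is a transversal,
equivalently when no legal move exists. -/
noncomputable def val {V : Type*} [Fintype V] (E : Finset (Finset V)) (b : Bool) (S : Finset V) : ℕ :=
  let L := Finset.univ.filter (fun v => Legal E S v)
  if h : L.Nonempty then
    have hL : L.attach.Nonempty := h.attach
    if b then
      1 + L.attach.inf' hL (fun v => val E false (insert v.1 S))
    else
      1 + L.attach.sup' hL (fun v => val E true (insert v.1 S))
  else 0
termination_by (Finset.univ \ S).card
decreasing_by
  all_goals {
    have hv : Legal E S v.1 := (Finset.mem_filter.mp v.2).2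
    have hvS : v.1 ∉ S := hv.not_mem
    apply Finset.card_lt_card
    constructor
    · intro x hx
      simp only [Finset.mem_sdiff] at hx ⊢
      exact ⟨hx.1, fun hmem => hx.2 (Finset.mem_insert_of_mem hmem)⟩
    · intro hsub
      have hvmem : v.1 ∈ Finset.univ \ S := by simp [hvS]
      have := hsub hvmem
      simp at this
  }

/-- Edge-hitter-start game transversal number starting from `A`. -/
noncomputable def tauG {V : Type*} [Fintype V] (E : Finset (Finset V)) (A : Finset V) : ℕ :=
  val E true A

/-- Staller-start game transversal number starting from `A`. -/
noncomputable def tauG' {V : Type*} [Fintype V] (E : Finset (Finset V)) (A : Finset V) : ℕ :=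
  val E false A

end TransversalGame

/-! Prove more generally that `val E b B ≤ val E b A` whenever every edge missed by `B` is also
missed by `A`, by well-founded induction on the number of vertices outside `A`. If Staller is to
move, each of his moves from `B` is legal from `A`, and the hypothesis survives when both positions
select that vertex. If Edge-hitter is to move, he copies an optimal move `v` from `A`. Should `v` be
illegal from `B`, every edge missed by `B` avoids `v`, so `B` is compared with `A + v` instead,
using that having the move is worth at most one extra move for Edge-hitter:
`val E true X ≤ 1 + val E false X`, which follows from the induction hypothesis at `X = A + v`. -/

namespace TransversalGame

variable {V : Type*}

noncomputable def residual (E : Finset (Finset V)) (S : Finset V) : Finset (Finset V) :=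
  E.filter (Disjoint S)

section Residual

variable {E : Finset (Finset V)} {A B S : Finset V} {u v : V}

@[simp]
theorem mem_residual {e : Finset V} : e ∈ residual E S ↔ e ∈ E ∧ Disjoint S e :=
  Finset.mem_filter

theorem legal_iff_exists_mem_residual : Legal E S v ↔ ∃ e ∈ residual E S, v ∈ e := by
  simp only [Legal, mem_residual, Finset.disjoint_left, and_assoc]
  grind

theorem residual_anti (hAB : A ⊆ B) : residual E B ⊆ residual E A := fun _ he =>
  mem_residual.2 ⟨(mem_residual.1 he).1, (mem_residual.1 he).2.mono_left hAB⟩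

theorem Legal.of_residual_subset (h : residual E B ⊆ residual E A) (hv : Legal E B v) :
    Legal E A v := by
  obtain ⟨e, he, hve⟩ := legal_iff_exists_mem_residual.1 hv
  exact legal_iff_exists_mem_residual.2 ⟨e, h he, hve⟩

theorem residual_insert_subset_insert (h : residual E B ⊆ residual E A) :
    residual E (insert u B) ⊆ residual E (insert u A) := by
  intro e he
  simp only [mem_residual, Finset.disjoint_insert_left] at he ⊢
  have heA := mem_residual.1 (h (mem_residual.2 ⟨he.1, he.2.2⟩))
  exact ⟨he.1, he.2.1, heA.2⟩

theorem residual_subset_insert_of_not_legal (h : residual E B ⊆ residual E A)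
    (hv : ¬Legal E B v) : residual E B ⊆ residual E (insert v A) := by
  intro e he
  have hve : v ∉ e := fun hve => hv (legal_iff_exists_mem_residual.2 ⟨e, he, hve⟩)
  have heA := mem_residual.1 (h he)
  exact mem_residual.2 ⟨heA.1, Finset.disjoint_insert_left.2 ⟨hve, heA.2⟩⟩

end Residual

section Value

variable [Fintype V] {E : Finset (Finset V)} {S : Finset V} {v : V}

theorem card_sdiff_insert_lt (hv : v ∉ S) :
    (Finset.univ \ insert v S).card < (Finset.univ \ S).card := by
  rw [Finset.sdiff_insert]
  exact Finset.card_erase_lt_of_mem (by simpa using hv)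

theorem val_eq_zero (h : ∀ v, ¬Legal E S v) (b : Bool) : val E b S = 0 := by
  rw [val, dif_neg]
  simpa [Finset.Nonempty] using h

theorem val_true_le (hv : Legal E S v) : val E true S ≤ 1 + val E false (insert v S) := by
  have hL : v ∈ Finset.univ.filter (fun v => Legal E S v) := by simpa using hv
  rw [val, dif_pos ⟨v, hL⟩, if_pos rfl]
  exact Nat.add_le_add_left (Finset.inf'_le _ (Finset.mem_attach _ ⟨v, hL⟩)) 1

theorem exists_val_true_eq (h : ∃ v, Legal E S v) :
    ∃ v, Legal E S v ∧ val E true S = 1 + val E false (insert v S) := by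
  obtain ⟨v, hv⟩ := h
  have hL : (Finset.univ.filter (fun v => Legal E S v)).Nonempty := ⟨v, by simpa using hv⟩
  obtain ⟨w, -, hw⟩ := Finset.exists_mem_eq_inf' hL.attach (fun w => val E false (insert w.1 S))
  refine ⟨w.1, (Finset.mem_filter.1 w.2).2, ?_⟩
  rw [val, dif_pos hL, if_pos rfl, hw]

theorem le_val_false (hv : Legal E S v) : 1 + val E true (insert v S) ≤ val E false S := by
  have hL : v ∈ Finset.univ.filter (fun v => Legal E S v) := by simpa using hv
  conv_rhs => rw [val, dif_pos ⟨v, hL⟩, if_neg Bool.false_ne_true]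
  exact Nat.add_le_add_left (Finset.le_sup' (fun w => val E true (insert w.1 S))
    (Finset.mem_attach _ ⟨v, hL⟩)) 1

theorem val_false_le {m : ℕ} (h : ∀ v, Legal E S v → 1 + val E true (insert v S) ≤ m) :
    val E false S ≤ m := by
  by_cases hS : ∃ v, Legal E S v
  · obtain ⟨v, hv⟩ := hS
    have hL : (Finset.univ.filter (fun v => Legal E S v)).Nonempty := ⟨v, by simpa using hv⟩
    rw [val, dif_pos hL, if_neg Bool.false_ne_true]
    obtain ⟨w, -, hw⟩ := Finset.exists_mem_eq_sup' hL.attach (fun w => val E true (insert w.1 S))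
    rw [hw]
    exact h w.1 (Finset.mem_filter.1 w.2).2
  · rw [val_eq_zero (not_exists.1 hS)]
    exact Nat.zero_le m

theorem val_true_le_one_add_val_false (h : ∀ w, val E false (insert w S) ≤ val E false S) :
    val E true S ≤ 1 + val E false S := by
  by_cases hS : ∃ w, Legal E S w
  · obtain ⟨w, hw⟩ := hS
    exact (val_true_le hw).trans (Nat.add_le_add_left (h w) 1)
  · rw [val_eq_zero (not_exists.1 hS)]
    exact Nat.zero_le _

theorem val_le_val_of_residual_subset (A B : Finset V) (h : residual E B ⊆ residual E A) :
    ∀ b, val E b B ≤ val E b A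
  | false => val_false_le fun u hu => by
      have hA := hu.of_residual_subset h
      calc 1 + val E true (insert u B)
          ≤ 1 + val E true (insert u A) := Nat.add_le_add_left
            (val_le_val_of_residual_subset _ _ (residual_insert_subset_insert h) true) 1
        _ ≤ val E false A := le_val_false hA
  | true => by
      by_cases hA : ∃ v, Legal E A v
      · obtain ⟨v, hv, hvA⟩ := exists_val_true_eq hA
        rw [hvA]
        by_cases hvB : Legal E B v
        · exact (val_true_le hvB).trans <| Nat.add_le_add_left
            (val_le_val_of_residual_subset _ _ (residual_insert_subset_insert h) false) 1
        · calc val E true B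
              ≤ val E true (insert v A) := val_le_val_of_residual_subset _ _
                (residual_subset_insert_of_not_legal h hvB) true
            _ ≤ 1 + val E false (insert v A) := val_true_le_one_add_val_false fun w =>
                val_le_val_of_residual_subset _ _
                  (residual_anti (Finset.subset_insert w _)) false
      · rw [val_eq_zero fun v hv => hA ⟨v, hv.of_residual_subset h⟩]
        exact Nat.zero_le _
termination_by (Finset.univ \ A).card
decreasing_by all_goals exact card_sdiff_insert_lt (Legal.not_mem ‹_›)

end Value

end TransversalGame

/-- Continuation principle for the transversal game: enlarging the preselected set
can only decrease both game transversal numbers. -/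
theorem transversal_continuation_principle {V : Type*} [Fintype V]
    (E : Finset (Finset V)) (A B : Finset V) (hAB : A ⊆ B) :
    TransversalGame.tauG E B ≤ TransversalGame.tauG E A ∧
    TransversalGame.tauG' E B ≤ TransversalGame.tauG' E A :=
  have h := TransversalGame.val_le_val_of_residual_subset A B (TransversalGame.residual_anti hAB)
  ⟨h true, h false⟩
end
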